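/- arXiv:1810.07625 — 2 statements merged into one kernel-verified Lean document; each statement's English description precedes it below -/
import Mathlib

section
/- In the setting of a Weyl group W with root lattice Λ_r and a group A of diagram automorphisms, the root lattice of the folded reflection group W₁ = W^A acting on 𝔥₁* = (𝔥*)^A equals the intersection Λ_r ∩ 𝔥₁*. -/
open scoped RealInnerProductSpace Classical

/-! In the basis `Δ`, a vector of the root lattice fixed by `A` has integer coefficients that
are constant on `A`-orbits, because `A` permutes the linearly independent set `Δ`; grouping the
terms orbit by orbit writes it as an integer combination of orbit sums. Conversely, orbit sums
are `A`-fixed elements of the root lattice. -/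

open scoped Pointwise

open MulAction Submodule

namespace LinearIsometryEquiv

variable {R E : Type*} [Semiring R] [SeminormedAddCommGroup E] [Module R E]

instance applyDistribMulAction : DistribMulAction (E ≃ₗᵢ[R] E) E where
  smul := (· <| ·)
  smul_zero := map_zero
  smul_add := map_add
  one_smul _ := rfl
  mul_smul _ _ _ := rfl

end LinearIsometryEquiv

noncomputable section OrbitSum

variable (G : Type*) {M : Type*} [Group G]

def orbitFinset [MulAction G M] (s : Finset M) (x : M) : Finset M :=
  {β ∈ s | β ∈ orbit G x}

def orbitSum [AddCommMonoid M] [MulAction G M] (s : Finset M) (x : M) : M :=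
  ∑ β ∈ orbitFinset G s x, β

variable {G}

section MulAction

variable [MulAction G M] {s : Finset M}

theorem mem_orbitFinset {x y : M} : y ∈ orbitFinset G s x ↔ y ∈ s ∧ y ∈ orbit G x :=
  Finset.mem_filter

theorem orbitFinset_eq_iff {x y : M} (hy : y ∈ s) :
    orbitFinset G s y = orbitFinset G s x ↔ y ∈ orbit G x := by
  refine ⟨fun h ↦ (mem_orbitFinset.mp (h ▸ mem_orbitFinset.mpr ⟨hy, mem_orbit_self y⟩)).2,
    fun h ↦ ?_⟩
  rw [orbitFinset, orbitFinset, orbit_eq_iff.mpr h]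

theorem smul_mem_orbitFinset_iff (hs : ∀ g : G, g • s = s) (g : G) {x y : M} :
    g • y ∈ orbitFinset G s x ↔ y ∈ orbitFinset G s x := by
  have hmem : g • y ∈ s ↔ y ∈ s := by
    simpa only [hs g] using Finset.smul_mem_smul_finset_iff (s := s) (b := y) g
  rw [mem_orbitFinset, mem_orbitFinset, ← orbit_eq_iff, orbit_smul, orbit_eq_iff, hmem]

theorem sum_comp_smul_of_smul_eq {N : Type*} [AddCommMonoid N] {g : G} (hs : g • s = s)
    (f : M → N) : ∑ β ∈ s, f (g • β) = ∑ β ∈ s, f β := by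
  conv_rhs => rw [← hs, ← Finset.image_smul, Finset.sum_image (fun _ _ _ _ ↦ smul_left_cancel g)]

end MulAction

variable [AddCommGroup M] [DistribMulAction G M] {s : Finset M}

theorem smul_orbitSum (hs : ∀ g : G, g • s = s) (g : G) (x : M) :
    g • orbitSum G s x = orbitSum G s x := by
  rw [orbitSum, Finset.smul_sum]
  exact Finset.sum_equiv (MulAction.toPerm g) (fun _ ↦ (smul_mem_orbitFinset_iff hs g).symm)
    (fun _ _ ↦ rfl)

variable {R : Type*} [Ring R] [Module R M]

theorem orbitSum_mem_span (x : M) : orbitSum G s x ∈ span R (s : Set M) :=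
  sum_mem fun _ hβ ↦ subset_span (mem_orbitFinset.mp hβ).1

theorem span_image_orbitSum_le_span :
    span R (s.image (orbitSum G s) : Set M) ≤ span R (s : Set M) :=
  span_le.mpr fun _ hy ↦ by
    obtain ⟨α, -, rfl⟩ := Finset.mem_image.mp hy
    exact orbitSum_mem_span α

theorem sum_smul_mem_span_orbitSum {c : M → R} (hc : ∀ g : G, ∀ β ∈ s, c (g • β) = c β) :
    ∑ β ∈ s, c β • β ∈ span R (s.image (orbitSum G s) : Set M) := by
  have hfiber (α : M) : {β ∈ s | orbitFinset G s β = orbitFinset G s α} = orbitFinset G s α := by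
    ext β
    rw [Finset.mem_filter, mem_orbitFinset]
    exact and_congr_right orbitFinset_eq_iff
  rw [← Finset.sum_image' (f := fun t ↦ ∑ β ∈ t, c β • β) (g := orbitFinset G s)
    (fun β ↦ c β • β) fun α _ ↦ by rw [hfiber]]
  refine sum_mem fun t ht ↦ ?_
  obtain ⟨α, hα, rfl⟩ := Finset.mem_image.mp ht
  have hconst : ∑ β ∈ orbitFinset G s α, c β • β = c α • orbitSum G s α := by
    rw [orbitSum, Finset.smul_sum]
    refine Finset.sum_congr rfl fun β hβ ↦ ?_
    obtain ⟨g, rfl⟩ := (mem_orbitFinset.mp hβ).2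
    rw [hc g α hα]
  rw [hconst]
  exact smul_mem _ _ (subset_span (Finset.mem_image_of_mem _ hα))

variable [SMulCommClass G R M]

theorem span_image_orbitSum_subset_fixedPoints (hs : ∀ g : G, g • s = s) :
    (span R (s.image (orbitSum G s) : Set M) : Set M) ⊆ fixedPoints G M := by
  intro x hx g
  refine LinearMap.eqOn_span (f := DistribSMul.toLinearMap R M g) (g := LinearMap.id) ?_ hx
  rintro _ hy
  obtain ⟨α, -, rfl⟩ := Finset.mem_image.mp hy
  exact smul_orbitSum hs g α

theorem coeff_smul_eq_of_smul_sum_eq (hs : ∀ g : G, g • s = s)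
    (hind : LinearIndepOn R id (s : Set M)) {c : M → R}
    (hc : ∀ g : G, g • ∑ β ∈ s, c β • β = ∑ β ∈ s, c β • β) (g : G) {β : M} (hβ : β ∈ s) :
    c (g • β) = c β := by
  have hcomp : ∑ γ ∈ s, c (g • γ) • γ = ∑ γ ∈ s, c γ • γ :=
    calc ∑ γ ∈ s, c (g • γ) • γ = ∑ γ ∈ s, c (g • γ) • g⁻¹ • g • γ := by
          simp only [inv_smul_smul]
      _ = ∑ γ ∈ s, c γ • g⁻¹ • γ := sum_comp_smul_of_smul_eq (hs g) (fun γ ↦ c γ • g⁻¹ • γ)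
      _ = g⁻¹ • ∑ γ ∈ s, c γ • γ := by simp only [Finset.smul_sum, smul_comm g⁻¹]
      _ = ∑ γ ∈ s, c γ • γ := hc g⁻¹
  have hzero : ∑ γ ∈ s, (c (g • γ) - c γ) • γ = 0 := by
    simp only [sub_smul, Finset.sum_sub_distrib, hcomp, sub_self]
  exact sub_eq_zero.mp (linearIndepOn_iff'.mp hind s _ subset_rfl hzero β hβ)

theorem span_image_orbitSum_eq_inter_fixedPoints (hs : ∀ g : G, g • s = s)
    (hind : LinearIndepOn R id (s : Set M)) :
    (span R (s.image (orbitSum G s) : Set M) : Set M) =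
      (span R (s : Set M) : Set M) ∩ fixedPoints G M := by
  refine subset_antisymm (Set.subset_inter (SetLike.coe_subset_coe.mpr
    span_image_orbitSum_le_span) (span_image_orbitSum_subset_fixedPoints hs)) ?_
  rintro x ⟨hspan, hfix⟩
  obtain ⟨c, -, rfl⟩ := mem_span_finset.mp hspan
  exact sum_smul_mem_span_orbitSum fun g _ hβ ↦ coeff_smul_eq_of_smul_sum_eq hs hind hfix g hβ

end OrbitSum

theorem folded_root_lattice_eq_intersection_general
    {V : Type*} [NormedAddCommGroup V] [InnerProductSpace ℝ V]
    (Δ : Finset V)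
    (hind : LinearIndependent ℝ (fun α : Δ => (α : V)))
    (A : Subgroup (V ≃ₗᵢ[ℝ] V))
    (hA : ∀ a ∈ A, (fun v : V => a v) '' Δ = Δ)
    (V₁ : Set V) (hV₁ : V₁ = {v : V | ∀ a ∈ A, a v = v})
    (Δ₁ : Finset V)
    (hΔ₁ : Δ₁ = Δ.image (fun α : V =>
      ∑ β ∈ Δ.filter (fun β : V => ∃ a ∈ A, a α = β), β)) :
    ((Submodule.span ℤ (Δ₁ : Set V) : Submodule ℤ V) : Set V)
      = ((Submodule.span ℤ (Δ : Set V) : Submodule ℤ V) : Set V) ∩ V₁ := by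
  have hmem_orbit (α β : V) : β ∈ orbit A α ↔ ∃ a ∈ A, a α = β :=
    ⟨fun ⟨a, h⟩ ↦ ⟨a, a.2, h⟩, fun ⟨a, ha, h⟩ ↦ ⟨⟨a, ha⟩, h⟩⟩
  have hΔ₁_eq : Δ₁ = Δ.image (orbitSum A Δ) := by
    rw [hΔ₁]
    congr 1
    funext α
    simp only [orbitSum, orbitFinset, hmem_orbit]
  have hV₁_eq : V₁ = fixedPoints A V := by
    ext v
    simp only [hV₁, Set.mem_ofPred_eq, mem_fixedPoints, Subtype.forall]
    rfl
  have hstable (a : A) : a • Δ = Δ := Finset.coe_injective <| by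
    rw [Finset.coe_smul_finset, ← Set.image_smul]
    exact hA a a.2
  rw [hΔ₁_eq, hV₁_eq]
  exact span_image_orbitSum_eq_inter_fixedPoints hstable (hind.restrict_scalars' ℤ)

/-- Let `W` be a finite Weyl group acting on `𝔥* = V` with simple roots `Δ` and root
lattice `Λr = ℤ-span(Δ)`, and let `A` be a group of diagram automorphisms (isometries
permuting `Δ`).  Then the root lattice of the folded reflection group `W₁ = Wᴬ` acting on
`𝔥₁* = (𝔥*)ᴬ = V₁` — namely the `ℤ`-span of the folded simple roots, the sums of the
`A`-orbits on `Δ` — equals the intersection `Λr ∩ 𝔥₁*`. -/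
theorem folded_root_lattice_eq_intersection
    {V : Type*} [NormedAddCommGroup V] [InnerProductSpace ℝ V] [FiniteDimensional ℝ V]
    (Δ : Finset V) (hΔ0 : (0 : V) ∉ Δ)
    (hind : LinearIndependent ℝ (fun α : Δ => (α : V)))
    (hcrys : ∀ α ∈ Δ, ∀ β ∈ Δ, ∃ m : ℤ, 2 * ⟪α, β⟫ / ⟪β, β⟫ = (m : ℝ))
    (hobtuse : ∀ α ∈ Δ, ∀ β ∈ Δ, α ≠ β → ⟪α, β⟫ ≤ 0)
    (W : Subgroup (V ≃ₗᵢ[ℝ] V)) [Finite W]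
    (hW : W = Subgroup.closure
      ((fun α : V => Submodule.reflection ((Submodule.span ℝ {α})ᗮ)) '' Δ))
    (A : Subgroup (V ≃ₗᵢ[ℝ] V))
    (hA : ∀ a ∈ A, (fun v : V => a v) '' Δ = Δ)
    (V₁ : Set V) (hV₁ : V₁ = {v : V | ∀ a ∈ A, a v = v})
    (Δ₁ : Finset V)
    (hΔ₁ : Δ₁ = Δ.image (fun α : V =>
      ∑ β ∈ Δ.filter (fun β : V => ∃ a ∈ A, a α = β), β)) :
    ((Submodule.span ℤ (Δ₁ : Set V) : Submodule ℤ V) : Set V)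
      = ((Submodule.span ℤ (Δ : Set V) : Submodule ℤ V) : Set V) ∩ V₁ :=
  folded_root_lattice_eq_intersection_general Δ hind A hA V₁ hV₁ Δ₁ hΔ₁
end

section
/- Let R be a commutative ring, and let (M_k)_{k≥1} be an inverse system of R-modules with surjective-image stabilization: the decreasing sequence of images of M_k → M_1 stabilizes (the Mittag-Leffler condition holds for each level). If each M_k is obtained as M/hᵏM for a module M over R[[h]] complete and separated in the h-adic topology with each M/hᵏM finitely generated over R, and the images im(M_k → M_1) stabilize, then lim M_k is a finitely generated R[[h]]-module. -/
/-!
If `M = span_R s + X • M`, dividing repeatedly by `X` writes every `x` as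
`∑ (c₀ + c₁ X + ⋯ + c_{k-1} X^{k-1}) • sᵢ + X^k • y_k`. The coefficients assemble into power
series `fᵢ`, and completeness of `R⟦X⟧` makes `x - ∑ fᵢ • sᵢ` divisible by every
`X^k`, so it vanishes by separatedness.
-/


namespace PowerSeries

variable {R M ι : Type*} [CommRing R] [AddCommGroup M] [Module R⟦X⟧ M] [Module R M]
  [IsScalarTower R R⟦X⟧ M] [Fintype ι] {v : ι → M}

theorem C_mul_X_pow_smul (r : R) (n : ℕ) (m : M) :
    (C r * X ^ n : R⟦X⟧) • m = (X : R⟦X⟧) ^ n • r • m := by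
  rw [mul_comm, mul_smul, ← algebraMap_smul R⟦X⟧ r m, algebraMap_apply, Algebra.algebraMap_self,
    RingHom.id_apply]

theorem exists_sub_sum_trunc_smul_eq_X_pow_smul
    (hgen : ∀ z : M, ∃ (c : ι → R) (w : M), z = ∑ i, c i • v i + (X : R⟦X⟧) • w) (x : M) :
    ∃ f : ι → R⟦X⟧, ∀ k, ∃ y : M,
      x - ∑ i, (trunc k (f i) : R⟦X⟧) • v i = (X : R⟦X⟧) ^ k • y := by
  choose c w hcw using hgen
  refine ⟨fun i => mk fun n => c (w^[n] x) i, fun k => ⟨w^[k] x, ?_⟩⟩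
  induction k with
  | zero => simp
  | succ k ih =>
    simp only [trunc_succ, Polynomial.coe_add, Polynomial.coe_monomial, coeff_mk,
      monomial_eq_C_mul_X_pow, add_smul, Finset.sum_add_distrib, C_mul_X_pow_smul,
      ← Finset.smul_sum, Function.iterate_succ_apply']
    rw [sub_add_eq_sub_sub, ih, ← smul_sub, sub_eq_of_eq_add' (hcw _), pow_succ, mul_smul]

theorem exists_forall_sub_sum_smul_eq_X_pow_smul
    (hgen : ∀ z : M, ∃ (c : ι → R) (w : M), z = ∑ i, c i • v i + (X : R⟦X⟧) • w) (x : M) :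
    ∃ f : ι → R⟦X⟧, ∀ k, ∃ y : M, x - ∑ i, f i • v i = (X : R⟦X⟧) ^ k • y := by
  obtain ⟨f, hf⟩ := exists_sub_sum_trunc_smul_eq_X_pow_smul hgen x
  refine ⟨f, fun k => ?_⟩
  obtain ⟨y, hy⟩ := hf k
  refine ⟨y - ∑ i, (mk fun n => coeff (n + k) (f i)) • v i, ?_⟩
  conv_lhs => rw [funext fun i => eq_X_pow_mul_shift_add_trunc k (f i)]
  simp only [add_smul, mul_smul, Finset.sum_add_distrib, ← Finset.smul_sum, smul_sub, ← hy]
  abel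

theorem span_range_eq_top_of_forall_eq_sum_add_X_smul
    (hgen : ∀ z : M, ∃ (c : ι → R) (w : M), z = ∑ i, c i • v i + (X : R⟦X⟧) • w)
    (hsep : ∀ z : M, (∀ k, ∃ y : M, z = (X : R⟦X⟧) ^ k • y) → z = 0) :
    Submodule.span R⟦X⟧ (Set.range v) = ⊤ := by
  refine eq_top_iff.mpr fun x _ => ?_
  obtain ⟨f, hf⟩ := exists_forall_sub_sum_smul_eq_X_pow_smul hgen x
  rw [sub_eq_zero.mp (hsep _ hf)]
  exact Submodule.sum_mem _ fun i _ => Submodule.smul_mem _ _ (Submodule.subset_span ⟨i, rfl⟩)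

end PowerSeries

theorem inverse_limit_finitely_generated_over_power_series_general
    {R : Type*} [CommRing R] {M : Type*} [AddCommGroup M]
    [Module (PowerSeries R) M] [Module R M]
    [IsScalarTower R (PowerSeries R) M]
    (N : ℕ → Submodule (PowerSeries R) M)
    (hN : ∀ k, N k = Submodule.map
      (LinearMap.lsmul (PowerSeries R) M ((PowerSeries.X : PowerSeries R) ^ k)) ⊤)
    -- each `M/hᵏM` is finitely generated over `R`
    (hfgR : ∀ k, ∃ s : Finset M, ∀ x : M, ∃ c : s → R,
      x - ∑ i ∈ s.attach, c i • (i : M) ∈ N k)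
    -- separatedness in the `h`-adic topology
    (hsep : ∀ x : M, (∀ k, x ∈ N k) → x = 0) :
    Module.Finite (PowerSeries R) M := by
  have mem_N {k : ℕ} {z : M} :
      z ∈ N k ↔ ∃ y : M, z = (PowerSeries.X : PowerSeries R) ^ k • y := by
    simp [hN k, eq_comm]
  obtain ⟨s, hs⟩ := hfgR 1
  have hgen (z : M) : ∃ (c : s → R) (w : M),
      z = ∑ i, c i • (i : M) + (PowerSeries.X : PowerSeries R) • w := by
    obtain ⟨c, hc⟩ := hs z
    obtain ⟨w, hw⟩ := mem_N.mp hc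
    refine ⟨c, w, ?_⟩
    rw [Finset.univ_eq_attach, ← pow_one (PowerSeries.X : PowerSeries R), ← hw, add_sub_cancel]
  have hspan := PowerSeries.span_range_eq_top_of_forall_eq_sum_add_X_smul hgen
    fun z hz => hsep z fun k => mem_N.mpr (hz k)
  exact ⟨Submodule.fg_def.mpr ⟨_, Set.finite_range _, hspan⟩⟩

/-- Let `R` be a commutative ring and `M` a module over `R[[h]]` which is complete and
separated in the `h`-adic topology (here `N k = hᵏM`, Cauchy sequences converge, and
`⋂ₖ hᵏM = 0`), with each quotient `M_k = M/hᵏM` finitely generated over `R`, and such that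
the Mittag-Leffler condition holds for the inverse system `(M_k)` (for each level `k` the
decreasing sequence of images `im(M_j → M_k)`, `j ≥ k`, stabilizes).  Then
`lim M_k ≅ M` is a finitely generated `R[[h]]`-module. -/
theorem inverse_limit_finitely_generated_over_power_series
    {R : Type*} [CommRing R] {M : Type*} [AddCommGroup M]
    [Module (PowerSeries R) M] [Module R M]
    [IsScalarTower R (PowerSeries R) M]
    (N : ℕ → Submodule (PowerSeries R) M)
    (hN : ∀ k, N k = Submodule.map
      (LinearMap.lsmul (PowerSeries R) M ((PowerSeries.X : PowerSeries R) ^ k)) ⊤)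
    (hle : ∀ {j k : ℕ}, k ≤ j → N j ≤ N k)
    -- each `M/hᵏM` is finitely generated over `R`
    (hfgR : ∀ k, ∃ s : Finset M, ∀ x : M, ∃ c : s → R,
      x - ∑ i ∈ s.attach, c i • (i : M) ∈ N k)
    -- separatedness in the `h`-adic topology
    (hsep : ∀ x : M, (∀ k, x ∈ N k) → x = 0)
    -- completeness in the `h`-adic topology: Cauchy sequences converge
    (hcomplete : ∀ seq : ℕ → M, (∀ k, seq (k + 1) - seq k ∈ N k) →
      ∃ x : M, ∀ k, x - seq k ∈ N k)
    -- Mittag-Leffler: for each `k`, the images of `M/hʲM → M/hᵏM`, `j ≥ k`, stabilize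
    (hML : ∀ k, ∃ K, ∃ hK : k ≤ K, ∀ j, ∀ hj : K ≤ j,
      LinearMap.range (Submodule.mapQ (N j) (N k) LinearMap.id
          (fun _ hx => hle (hK.trans hj) hx)) =
        LinearMap.range (Submodule.mapQ (N K) (N k) LinearMap.id
          (fun _ hx => hle hK hx))) :
    Module.Finite (PowerSeries R) M :=
  inverse_limit_finitely_generated_over_power_series_general N hN hfgR hsep
end
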